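/- arXiv:2401.02471 — 2 statements merged into one kernel-verified Lean document; each statement's English description precedes it below -/
import Mathlib

section
/- O(1/√k) convergence rate of the conjugate-based algorithm (Theorem 2(ii)): under the same setting, fix a horizon k ≥ 1, a point (x⋄, σ⋄) ∈ Ω × B, and d̄ > 0 with ‖(x[1], σ[1]) − (x⋄, σ⋄)‖² ≤ 2 d̄. If the constant step sizes α_j = √(2 d̄)/(M₂ √k) are used for j = 1, …, k, then the weighted averages x̂[k] = (Σ_{j=1}^k α_j x[j])/(Σ_{j=1}^k α_j) and σ̂[k] = (Σ_{j=1}^k α_j σ[j])/(Σ_{j=1}^k α_j) satisfy Γ(x̂[k], σ⋄) − Γ(x⋄, σ̂[k]) ≤ √(2 d̄) · M₂ / √k. -/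
/-!
The iteration is a projected gradient descent–ascent step for `Γ`, which is convex in `x` when
`σ ≥ 0` and concave in `σ`. Since projections onto convex sets do not increase distances to
points of the set, the squared distance `D_j` of the `j`-th iterate to `(x⋄, σ⋄)` satisfies
`D_{j+1} ≤ D_j - 2 α_j ⟪(∇ₓΓ, -∇_σΓ)(z_j), z_j - z⋄⟫ + α_j² M₂²`, and the gradient inequalities of the convex
and concave parts bound the pairing from below by the gap `Γ(x_j, σ⋄) - Γ(x⋄, σ_j)`.
Telescoping, then Jensen's inequality at the weighted averages, bounds the gap of the averages by
`(D_1 + M₂² Σ α_j²) / (2 Σ α_j)`, which the constant steps turn into `√(2 d̄) M₂ / √k`.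
-/

open scoped BigOperators RealInnerProductSpace
open Finset

lemma sq_max_min_sub_le {W s : ℝ} (hs : s ∈ Set.Icc 0 W) (t : ℝ) :
    (max 0 (min W t) - s) ^ 2 ≤ (t - s) ^ 2 := by
  have h0W : (0 : ℝ) ≤ W := hs.1.trans hs.2
  have := Set.abs_projIcc_sub_projIcc h0W (c := t) (d := s)
  rw [Set.projIcc_of_mem h0W hs, Set.coe_projIcc] at this
  exact sq_le_sq.2 this

lemma max_min_mem_Icc {W : ℝ} (hW : 0 ≤ W) (t : ℝ) : max 0 (min W t) ∈ Set.Icc 0 W :=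
  Set.coe_projIcc 0 W hW t ▸ (Set.projIcc 0 W hW t).2

section InnerProductSpace

variable {E : Type*} [NormedAddCommGroup E] [InnerProductSpace ℝ E]

lemma norm_sub_sq_le_of_forall_norm_sub_le {K : Set E} (hK : Convex ℝ K) {u p y : E}
    (hp : p ∈ K) (hy : y ∈ K) (hmin : ∀ w ∈ K, ‖u - p‖ ≤ ‖u - w‖) :
    ‖p - y‖ ^ 2 ≤ ‖u - y‖ ^ 2 := by
  have hinf : ‖u - p‖ = ⨅ w : K, ‖u - w‖ := by
    have : Nonempty K := ⟨⟨p, hp⟩⟩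
    exact le_antisymm (le_ciInf fun w => hmin w w.2)
      (ciInf_le ⟨0, fun _ ⟨w, h⟩ => h ▸ norm_nonneg _⟩ (⟨p, hp⟩ : K))
  have hvar : ⟪u - p, y - p⟫ ≤ 0 := (norm_eq_iInf_iff_real_inner_le_zero hK hp).1 hinf y hy
  have hexp : ‖u - y‖ ^ 2 = ‖u - p‖ ^ 2 - 2 * ⟪u - p, y - p⟫ + ‖p - y‖ ^ 2 := by
    rw [show u - y = (u - p) - (y - p) by abel, norm_sub_sq_real, ← norm_neg (y - p), neg_sub]
  linarith [sq_nonneg ‖u - p‖]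

lemma norm_sub_sq_le_of_projected_step {K : Set E} (hK : Convex ℝ K) {x g p y : E} {α : ℝ}
    (hp : p ∈ K) (hy : y ∈ K) (hmin : ∀ w ∈ K, ‖x - α • g - p‖ ≤ ‖x - α • g - w‖) :
    ‖p - y‖ ^ 2 ≤ ‖x - y‖ ^ 2 - 2 * α * ⟪g, x - y⟫ + α ^ 2 * ‖g‖ ^ 2 := by
  refine (norm_sub_sq_le_of_forall_norm_sub_le hK hp hy hmin).trans_eq ?_
  rw [show x - α • g - y = (x - y) - α • g by abel, norm_sub_sq_real, real_inner_smul_right,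
    real_inner_comm, norm_smul, Real.norm_eq_abs, mul_pow, sq_abs]
  ring

lemma norm_sq_sub_norm_sq_le_two_inner (u v : E) : ‖u‖ ^ 2 - ‖v‖ ^ 2 ≤ 2 * ⟪u, u - v⟫ := by
  have h := norm_sub_sq_real u v
  rw [inner_sub_right, real_inner_self_eq_norm_sq]
  linarith [sq_nonneg ‖u - v‖]

end InnerProductSpace

lemma convexOn_univ_norm_sub_sq {E F : Type*} [NormedAddCommGroup E] [NormedSpace ℝ E]
    [AddCommGroup F] [Module ℝ F] (L : F →ₗ[ℝ] E) (c : E) :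
    ConvexOn ℝ Set.univ fun x => ‖L x - c‖ ^ 2 := by
  have h := ((convexOn_univ_norm.pow (fun _ _ => norm_nonneg _) 2).translate_right
    (-c)).comp_linearMap L
  rw [Set.preimage_univ, Set.preimage_univ] at h
  refine h.congr fun x _ => ?_
  simp [sub_eq_neg_add]

lemma concaveOn_univ_mul_sub_sq_div_four (c : ℝ) :
    ConcaveOn ℝ Set.univ fun s : ℝ => s * c - s ^ 2 / 4 := by
  have h := ((LinearMap.mulRight ℝ c).concaveOn convex_univ).sub
    ((Even.convexOn_pow even_two).smul (by norm_num : (0 : ℝ) ≤ 1 / 4))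
  refine h.congr fun s _ => ?_
  simp only [LinearMap.mulRight_apply, Pi.sub_apply, smul_eq_mul]
  ring

lemma mul_sub_sq_div_four_le (s t c : ℝ) :
    t * c - t ^ 2 / 4 ≤ s * c - s ^ 2 / 4 - (c - s / 2) * (s - t) := by
  linarith [sq_nonneg (s - t)]

section ConvexSum

variable {𝕜 E β ι : Type*} [Semiring 𝕜] [PartialOrder 𝕜] [AddCommMonoid E] [SMul 𝕜 E]
  [AddCommMonoid β] [PartialOrder β] [IsOrderedAddMonoid β] [Module 𝕜 β]
  {s : Set E}

lemma convexOn_sum (hs : Convex 𝕜 s) (t : Finset ι) {f : ι → E → β}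
    (hf : ∀ i ∈ t, ConvexOn 𝕜 s (f i)) : ConvexOn 𝕜 s fun x => ∑ i ∈ t, f i x := by
  classical
  induction t using Finset.induction_on with
  | empty => simpa using convexOn_const (0 : β) hs
  | insert i t hi ih =>
    simp_rw [sum_insert hi]
    exact (hf i (mem_insert_self i t)).add (ih fun j hj => hf j (mem_insert_of_mem hj))

lemma concaveOn_sum (hs : Convex 𝕜 s) (t : Finset ι) {f : ι → E → β}
    (hf : ∀ i ∈ t, ConcaveOn 𝕜 s (f i)) : ConcaveOn 𝕜 s fun x => ∑ i ∈ t, f i x := by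
  classical
  induction t using Finset.induction_on with
  | empty => simpa using concaveOn_const (0 : β) hs
  | insert i t hi ih =>
    simp_rw [sum_insert hi]
    exact (hf i (mem_insert_self i t)).add (ih fun j hj => hf j (mem_insert_of_mem hj))

end ConvexSum

lemma sum_mul_le_of_descent {D g α : ℕ → ℝ} {M : ℝ} (k : ℕ)
    (hstep : ∀ j ∈ Icc 1 k, D (j + 1) ≤ D j - 2 * α j * g j + α j ^ 2 * M ^ 2) :
    ∑ j ∈ Icc 1 k, α j * g j ≤ (D 1 - D (k + 1) + M ^ 2 * ∑ j ∈ Icc 1 k, α j ^ 2) / 2 := by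
  induction k with
  | zero => simp
  | succ k ih =>
    have ih := ih fun j hj => hstep j (Icc_subset_Icc_right (Nat.le_succ k) hj)
    rw [sum_Icc_succ_top (Nat.le_add_left 1 k), sum_Icc_succ_top (Nat.le_add_left 1 k)]
    have hk := hstep (k + 1) (mem_Icc.2 ⟨Nat.le_add_left 1 k, le_rfl⟩)
    linarith

lemma inv_mul_le_of_constant_step {K c M D₀ δ : ℝ} (hK : 0 < K) (hM : 0 < M) (hδ : 0 < δ)
    (hc : c = √(2 * δ) / (M * √K)) (hD₀ : D₀ ≤ 2 * δ) :
    (K * c)⁻¹ * ((D₀ + M ^ 2 * (K * c ^ 2)) / 2) ≤ √(2 * δ) * M / √K := by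
  have hsK : √K ^ 2 = K := Real.sq_sqrt hK.le
  have hsδ : √(2 * δ) ^ 2 = 2 * δ := Real.sq_sqrt (by positivity)
  have hcpos : 0 < c := hc ▸ by positivity
  have hMc : M ^ 2 * (K * c ^ 2) = 2 * δ := by
    rw [hc, div_pow, mul_pow, hsδ, hsK]; field_simp
  calc (K * c)⁻¹ * ((D₀ + M ^ 2 * (K * c ^ 2)) / 2) ≤ (K * c)⁻¹ * (2 * δ) := by
        gcongr; linarith
    _ = √(2 * δ) * M / √K := by
        rw [hc]; field_simp; rw [hsK, hsδ]; ring

lemma inv_sum_mul_le_of_descent {D g α : ℕ → ℝ} {M δ : ℝ} {k : ℕ} (hk : 1 ≤ k) (hM : 0 < M)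
    (hδ : 0 < δ) (hα : ∀ j ∈ Icc 1 k, α j = √(2 * δ) / (M * √k))
    (hstep : ∀ j ∈ Icc 1 k, D (j + 1) ≤ D j - 2 * α j * g j + α j ^ 2 * M ^ 2)
    (hD₁ : D 1 ≤ 2 * δ) (hD : 0 ≤ D (k + 1)) :
    (∑ j ∈ Icc 1 k, α j)⁻¹ * ∑ j ∈ Icc 1 k, α j * g j ≤ √(2 * δ) * M / √k := by
  set c := √(2 * δ) / (M * √k)
  have hsum_const : ∀ f : ℝ → ℝ, ∑ j ∈ Icc 1 k, f (α j) = k * f c := fun f => by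
    rw [sum_congr rfl fun j hj => congrArg f (hα j hj), sum_const, Nat.card_Icc,
      Nat.add_sub_cancel, nsmul_eq_mul]
  have hrate := sum_mul_le_of_descent k hstep
  rw [hsum_const (· ^ 2)] at hrate
  have hT : ∑ j ∈ Icc 1 k, α j = k * c := hsum_const id
  rw [hT]
  exact (mul_le_mul_of_nonneg_left hrate (by positivity)).trans
    (inv_mul_le_of_constant_step (by exact_mod_cast hk) hM hδ rfl (by linarith))

lemma sum_eq_sum_add_sum_swap {α M : Type*} [DecidableEq α] [AddCommMonoid M]
    {Ess U : Finset (α × α)} (hsym : ∀ i j, (i, j) ∈ Ess → (j, i) ∈ Ess) (hUsub : U ⊆ Ess)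
    (hUone : ∀ i j, (i, j) ∈ Ess → ((i, j) ∈ U ↔ (j, i) ∉ U)) (f : α × α → M) :
    ∑ p ∈ Ess, f p = ∑ p ∈ U, f p + ∑ p ∈ U, f p.swap := by
  rw [← sum_filter_add_sum_filter_not Ess (· ∈ U), filter_mem_eq_inter, inter_eq_right.2 hUsub]
  congr 1
  refine sum_nbij' Prod.swap Prod.swap (fun p hp => ?_) (fun p hp => ?_) (by simp) (by simp)
    (by simp)
  · obtain ⟨hpE, hpU⟩ := mem_filter.1 hp
    exact not_not.1 (mt (hUone p.1 p.2 hpE).2 hpU)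
  · exact mem_filter.2 ⟨hsym p.1 p.2 (hUsub hp), (hUone p.1 p.2 (hUsub hp)).1 hp⟩

namespace SensorLocalization

variable {E S A : Type*} [NormedAddCommGroup E]
  (a : A → E) (Ess U : Finset (S × S)) (Eas : Finset (S × A)) (d : S → S → ℝ) (e : S → A → ℝ)

noncomputable section

/-- The function `Γ`. Dual variables are functions on `S × S` and `S × A`; only their values on
`U` and `Eas` enter. -/
def complementary (x : S → E) (σs : S × S → ℝ) (σa : S × A → ℝ) : ℝ :=
  (∑ p ∈ U, (σs p * (‖x p.1 - x p.2‖ ^ 2 - d p.1 p.2 ^ 2) - σs p ^ 2 / 4))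
    + ∑ q ∈ Eas, (σa q * (‖x q.1 - a q.2‖ ^ 2 - e q.1 q.2 ^ 2) - σa q ^ 2 / 4)

def primalGrad [NormedSpace ℝ E] [Fintype S] [DecidableEq S] [Fintype A] [DecidableEq A]
    (x : S → E) (σs : S × S → ℝ) (σa : S × A → ℝ) (i : S) : E :=
  (∑ j ∈ univ.filter (fun j => (i, j) ∈ Ess),
    (2 * (if (i, j) ∈ U then σs (i, j) else σs (j, i))) • (x i - x j))
    + ∑ l ∈ univ.filter (fun l => (i, l) ∈ Eas), (2 * σa (i, l)) • (x i - a l)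

def dualGradS (x : S → E) (σs : S × S → ℝ) (p : S × S) : ℝ :=
  (‖x p.1 - x p.2‖ ^ 2 - d p.1 p.2 ^ 2) - σs p / 2

def dualGradA (x : S → E) (σa : S × A → ℝ) (q : S × A) : ℝ :=
  (‖x q.1 - a q.2‖ ^ 2 - e q.1 q.2 ^ 2) - σa q / 2

def sqDist [Fintype S] (x xd : S → E) (σs σsd : S × S → ℝ) (σa σad : S × A → ℝ) : ℝ :=
  (∑ i, ‖x i - xd i‖ ^ 2) + (∑ p ∈ U, (σs p - σsd p) ^ 2) + ∑ q ∈ Eas, (σa q - σad q) ^ 2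

end

lemma sqDist_nonneg [Fintype S] (x xd : S → E) (σs σsd : S × S → ℝ) (σa σad : S × A → ℝ) :
    0 ≤ sqDist U Eas x xd σs σsd σa σad := by
  unfold sqDist
  positivity

lemma concaveOn_complementary (x : S → E) :
    ConcaveOn ℝ Set.univ fun σ : (S × S → ℝ) × (S × A → ℝ) =>
      complementary a U Eas d e x σ.1 σ.2 :=
  (concaveOn_sum convex_univ U fun p _ =>
    (concaveOn_univ_mul_sub_sq_div_four _).comp_linearMap
      ((LinearMap.proj (R := ℝ) (φ := fun _ : S × S => ℝ) p).comp
        (LinearMap.fst ℝ (S × S → ℝ) (S × A → ℝ)))).add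
  (concaveOn_sum convex_univ Eas fun q _ =>
    (concaveOn_univ_mul_sub_sq_div_four _).comp_linearMap
      ((LinearMap.proj (R := ℝ) (φ := fun _ : S × A => ℝ) q).comp
        (LinearMap.snd ℝ (S × S → ℝ) (S × A → ℝ))))

lemma complementary_le_sub_sum_dualGrad (x : S → E) (σs σsd : S × S → ℝ)
    (σa σad : S × A → ℝ) :
    complementary a U Eas d e x σsd σad ≤ complementary a U Eas d e x σs σa
      - ((∑ p ∈ U, dualGradS d x σs p * (σs p - σsd p))
        + ∑ q ∈ Eas, dualGradA a e x σa q * (σa q - σad q)) := by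
  rw [complementary, complementary, add_sub_add_comm, ← sum_sub_distrib, ← sum_sub_distrib]
  exact add_le_add
    (sum_le_sum fun p _ => mul_sub_sq_div_four_le (σs p) (σsd p) _)
    (sum_le_sum fun q _ => mul_sub_sq_div_four_le (σa q) (σad q) _)

section NormedSpace

variable [NormedSpace ℝ E]

lemma convexOn_complementary {σs : S × S → ℝ} {σa : S × A → ℝ} (hσs : ∀ p ∈ U, 0 ≤ σs p)
    (hσa : ∀ q ∈ Eas, 0 ≤ σa q) :
    ConvexOn ℝ Set.univ fun x : S → E => complementary a U Eas d e x σs σa := by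
  refine (convexOn_sum convex_univ U fun p hp => ?_).add
    (convexOn_sum convex_univ Eas fun q hq => ?_)
  · refine (((convexOn_univ_norm_sub_sq (LinearMap.proj (R := ℝ) (φ := fun _ : S => E) p.1
      - LinearMap.proj p.2) 0).smul (hσs p hp)).add_const
      (-(σs p * d p.1 p.2 ^ 2) - σs p ^ 2 / 4)).congr fun x _ => ?_
    simp only [Pi.add_apply, LinearMap.sub_apply, LinearMap.coe_proj, Function.eval, sub_zero,
      smul_eq_mul]
    ring
  · refine (((convexOn_univ_norm_sub_sq (LinearMap.proj (R := ℝ) (φ := fun _ : S => E) q.1)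
      (a q.2)).smul (hσa q hq)).add_const
      (-(σa q * e q.1 q.2 ^ 2) - σa q ^ 2 / 4)).congr fun x _ => ?_
    simp only [Pi.add_apply, LinearMap.coe_proj, Function.eval, smul_eq_mul]
    ring

lemma complementary_centerMass_sub_le {ι : Type*} (t : Finset ι) {w : ι → ℝ}
    (hw : ∀ j ∈ t, 0 ≤ w j) (hwpos : 0 < ∑ j ∈ t, w j) (x : ι → S → E) (σs : ι → S × S → ℝ)
    (σa : ι → S × A → ℝ) (xd : S → E) {σsd : S × S → ℝ} {σad : S × A → ℝ}
    (hσsd : ∀ p ∈ U, 0 ≤ σsd p) (hσad : ∀ q ∈ Eas, 0 ≤ σad q) :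
    complementary a U Eas d e (fun i => (∑ j ∈ t, w j)⁻¹ • ∑ j ∈ t, w j • x j i) σsd σad
      - complementary a U Eas d e xd (fun p => (∑ j ∈ t, w j * σs j p) / ∑ j ∈ t, w j)
          (fun q => (∑ j ∈ t, w j * σa j q) / ∑ j ∈ t, w j)
      ≤ (∑ j ∈ t, w j)⁻¹ * ∑ j ∈ t, w j * (complementary a U Eas d e (x j) σsd σad
          - complementary a U Eas d e xd (σs j) (σa j)) := by
  have hx := (convexOn_complementary a U Eas d e hσsd hσad).map_centerMass_le hw hwpos
    (p := x) fun _ _ => Set.mem_univ _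
  have hσ := (concaveOn_complementary a U Eas d e xd).le_map_centerMass hw hwpos
    (p := fun j => (σs j, σa j)) fun _ _ => Set.mem_univ _
  have hxavg : (∑ j ∈ t, w j)⁻¹ • ∑ j ∈ t, w j • x j
      = fun i => (∑ j ∈ t, w j)⁻¹ • ∑ j ∈ t, w j • x j i := by
    funext i
    simp only [Pi.smul_apply, Finset.sum_apply]
  have hσavg : (∑ j ∈ t, w j)⁻¹ • ∑ j ∈ t, w j • (σs j, σa j)
      = (fun p => (∑ j ∈ t, w j * σs j p) / ∑ j ∈ t, w j,
          fun q => (∑ j ∈ t, w j * σa j q) / ∑ j ∈ t, w j) := by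
    ext <;> simp [Prod.fst_sum, Prod.snd_sum, Finset.sum_apply, div_eq_inv_mul]
  simp only [centerMass, Function.comp_apply, smul_eq_mul, hxavg, hσavg] at hx hσ
  simp only [mul_sub, sum_sub_distrib]
  linarith

end NormedSpace

section InnerProductSpace

variable [InnerProductSpace ℝ E] [Fintype S]

lemma sqDist_le_of_projected_step {Ω : S → Set E} (hΩ : ∀ i, Convex ℝ (Ω i))
    {proj : S → E → E} (hproj : ∀ i u, proj i u ∈ Ω i ∧ ∀ w ∈ Ω i, ‖u - proj i u‖ ≤ ‖u - w‖)
    {W α : ℝ} {x x' xd gx : S → E} {σs σs' σsd gs : S × S → ℝ} {σa σa' σad ga : S × A → ℝ}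
    (hx' : ∀ i, x' i = proj i (x i - α • gx i))
    (hσs' : ∀ p ∈ U, σs' p = max 0 (min W (σs p + α * gs p)))
    (hσa' : ∀ q ∈ Eas, σa' q = max 0 (min W (σa q + α * ga q)))
    (hxd : ∀ i, xd i ∈ Ω i) (hσsd : ∀ p ∈ U, σsd p ∈ Set.Icc 0 W)
    (hσad : ∀ q ∈ Eas, σad q ∈ Set.Icc 0 W) :
    sqDist U Eas x' xd σs' σsd σa' σad ≤ sqDist U Eas x xd σs σsd σa σad
      - 2 * α * ((∑ i, ⟪gx i, x i - xd i⟫) - (∑ p ∈ U, gs p * (σs p - σsd p))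
        - ∑ q ∈ Eas, ga q * (σa q - σad q))
      + α ^ 2 * ((∑ i, ‖gx i‖ ^ 2) + (∑ p ∈ U, gs p ^ 2) + ∑ q ∈ Eas, ga q ^ 2) := by
  have hX : ∑ i, ‖x' i - xd i‖ ^ 2 ≤ ∑ i, (‖x i - xd i‖ ^ 2 - 2 * α * ⟪gx i, x i - xd i⟫
      + α ^ 2 * ‖gx i‖ ^ 2) := sum_le_sum fun i _ => by
    rw [hx' i]
    exact norm_sub_sq_le_of_projected_step (hΩ i) (hproj i _).1 (hxd i) (hproj i _).2
  have hS : ∑ p ∈ U, (σs' p - σsd p) ^ 2 ≤ ∑ p ∈ U, ((σs p - σsd p) ^ 2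
      + 2 * α * (gs p * (σs p - σsd p)) + α ^ 2 * gs p ^ 2) := sum_le_sum fun p hp => by
    rw [hσs' p hp]
    exact (sq_max_min_sub_le (hσsd p hp) _).trans_eq (by ring)
  have hA : ∑ q ∈ Eas, (σa' q - σad q) ^ 2 ≤ ∑ q ∈ Eas, ((σa q - σad q) ^ 2
      + 2 * α * (ga q * (σa q - σad q)) + α ^ 2 * ga q ^ 2) := sum_le_sum fun q hq => by
    rw [hσa' q hq]
    exact (sq_max_min_sub_le (hσad q hq) _).trans_eq (by ring)
  simp only [sum_add_distrib, sum_sub_distrib, ← mul_sum] at hX hS hA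
  simp only [sqDist]
  linarith

variable [DecidableEq S] [Fintype A] [DecidableEq A]

lemma sum_inner_primalGrad (hsym : ∀ i j, (i, j) ∈ Ess → (j, i) ∈ Ess) (hUsub : U ⊆ Ess)
    (hUone : ∀ i j, (i, j) ∈ Ess → ((i, j) ∈ U ↔ (j, i) ∉ U))
    (x y : S → E) (σs : S × S → ℝ) (σa : S × A → ℝ) :
    ∑ i, ⟪primalGrad a Ess U Eas x σs σa i, y i⟫
      = ∑ p ∈ U, 2 * σs p * ⟪x p.1 - x p.2, y p.1 - y p.2⟫
        + ∑ q ∈ Eas, 2 * σa q * ⟪x q.1 - a q.2, y q.1⟫ := by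
  simp only [primalGrad, inner_add_left, sum_inner, real_inner_smul_left, sum_add_distrib]
  congr 1
  -- each edge of `U` is met twice, once from each endpoint
  · rw [← sum_finset_product' Ess univ _ (by simp), sum_eq_sum_add_sum_swap hsym hUsub hUone,
      ← sum_add_distrib]
    refine sum_congr rfl fun p hp => ?_
    rw [Prod.fst_swap, Prod.snd_swap, if_pos hp, if_neg ((hUone _ _ (hUsub hp)).1 hp),
      ← neg_sub (x p.1), inner_neg_left, inner_sub_right]
    ring
  · exact (sum_finset_product' Eas univ _ (by simp)).symm

lemma complementary_sub_le_sum_inner_primalGrad (hsym : ∀ i j, (i, j) ∈ Ess → (j, i) ∈ Ess)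
    (hUsub : U ⊆ Ess) (hUone : ∀ i j, (i, j) ∈ Ess → ((i, j) ∈ U ↔ (j, i) ∉ U))
    (x xd : S → E) {σs : S × S → ℝ} {σa : S × A → ℝ} (hσs : ∀ p ∈ U, 0 ≤ σs p)
    (hσa : ∀ q ∈ Eas, 0 ≤ σa q) :
    complementary a U Eas d e x σs σa - complementary a U Eas d e xd σs σa
      ≤ ∑ i, ⟪primalGrad a Ess U Eas x σs σa i, x i - xd i⟫ := by
  rw [sum_inner_primalGrad a Ess U Eas hsym hUsub hUone, complementary, complementary,
    add_sub_add_comm, ← sum_sub_distrib, ← sum_sub_distrib]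
  refine add_le_add (sum_le_sum fun p hp => ?_) (sum_le_sum fun q hq => ?_)
  · have h := mul_le_mul_of_nonneg_left
      (norm_sq_sub_norm_sq_le_two_inner (x p.1 - x p.2) (xd p.1 - xd p.2)) (hσs p hp)
    rw [show x p.1 - x p.2 - (xd p.1 - xd p.2) = x p.1 - xd p.1 - (x p.2 - xd p.2) by abel]
      at h
    linarith
  · have h := mul_le_mul_of_nonneg_left
      (norm_sq_sub_norm_sq_le_two_inner (x q.1 - a q.2) (xd q.1 - a q.2)) (hσa q hq)
    rw [sub_sub_sub_cancel_right] at h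
    linarith

lemma sqDist_step_le_sub_gap (hsym : ∀ i j, (i, j) ∈ Ess → (j, i) ∈ Ess) (hUsub : U ⊆ Ess)
    (hUone : ∀ i j, (i, j) ∈ Ess → ((i, j) ∈ U ↔ (j, i) ∉ U))
    {Ω : S → Set E} (hΩ : ∀ i, Convex ℝ (Ω i))
    {proj : S → E → E} (hproj : ∀ i u, proj i u ∈ Ω i ∧ ∀ w ∈ Ω i, ‖u - proj i u‖ ≤ ‖u - w‖)
    {W α M : ℝ} (hα : 0 ≤ α) {x x' xd : S → E} {σs σs' σsd : S × S → ℝ}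
    {σa σa' σad : S × A → ℝ} (hσs : ∀ p ∈ U, 0 ≤ σs p) (hσa : ∀ q ∈ Eas, 0 ≤ σa q)
    (hM : (∑ i, ‖primalGrad a Ess U Eas x σs σa i‖ ^ 2) + (∑ p ∈ U, dualGradS d x σs p ^ 2)
      + (∑ q ∈ Eas, dualGradA a e x σa q ^ 2) ≤ M ^ 2)
    (hx' : ∀ i, x' i = proj i (x i - α • primalGrad a Ess U Eas x σs σa i))
    (hσs' : ∀ p ∈ U, σs' p = max 0 (min W (σs p + α * dualGradS d x σs p)))
    (hσa' : ∀ q ∈ Eas, σa' q = max 0 (min W (σa q + α * dualGradA a e x σa q)))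
    (hxd : ∀ i, xd i ∈ Ω i) (hσsd : ∀ p ∈ U, σsd p ∈ Set.Icc 0 W)
    (hσad : ∀ q ∈ Eas, σad q ∈ Set.Icc 0 W) :
    sqDist U Eas x' xd σs' σsd σa' σad ≤ sqDist U Eas x xd σs σsd σa σad
      - 2 * α * (complementary a U Eas d e x σsd σad - complementary a U Eas d e xd σs σa)
      + α ^ 2 * M ^ 2 := by
  have hstep := sqDist_le_of_projected_step U Eas hΩ hproj hx' hσs' hσa' hxd hσsd hσad
  have hdual := complementary_le_sub_sum_dualGrad a U Eas d e x σs σsd σa σad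
  have hprimal := complementary_sub_le_sum_inner_primalGrad a Ess U Eas d e hsym hUsub hUone
    x xd hσs hσa
  have hpairing := mul_le_mul_of_nonneg_left (add_le_add hdual hprimal)
    (by positivity : 0 ≤ 2 * α)
  linear_combination hstep + hpairing + mul_le_mul_of_nonneg_left hM (sq_nonneg α)

end InnerProductSpace

end SensorLocalization

theorem stmt_13_general
    (n : ℕ)
    (S A : Type) [Fintype S] [DecidableEq S] [Fintype A] [DecidableEq A]
    (a : A → EuclideanSpace ℝ (Fin n))
    (Ess : Finset (S × S))
    (hsym : ∀ i j : S, (i, j) ∈ Ess → (j, i) ∈ Ess)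
    (U : Finset (S × S)) (hUsub : U ⊆ Ess)
    (hUone : ∀ i j : S, (i, j) ∈ Ess → ((i, j) ∈ U ↔ (j, i) ∉ U))
    (Eas : Finset (S × A))
    (d : S → S → ℝ)
    (e : S → A → ℝ)
    -- the complementary function
    (Γ : (S → EuclideanSpace ℝ (Fin n)) → (S × S → ℝ) → (S × A → ℝ) → ℝ)
    (hΓ : ∀ x σs σa, Γ x σs σa =
      (∑ p ∈ U, (σs p * (‖x p.1 - x p.2‖ ^ 2 - d p.1 p.2 ^ 2) - σs p ^ 2 / 4))
        + ∑ q ∈ Eas,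
            (σa q * (‖x q.1 - a q.2‖ ^ 2 - e q.1 q.2 ^ 2) - σa q ^ 2 / 4))
    -- the partial gradients of Γ
    (Gx : (S → EuclideanSpace ℝ (Fin n)) → (S × S → ℝ) → (S × A → ℝ) →
      S → EuclideanSpace ℝ (Fin n))
    (hGx : ∀ x σs σa i, Gx x σs σa i =
      (∑ j ∈ Finset.univ.filter (fun j => (i, j) ∈ Ess),
        (2 * (if (i, j) ∈ U then σs (i, j) else σs (j, i))) • (x i - x j))
        + ∑ l ∈ Finset.univ.filter (fun l => (i, l) ∈ Eas),
            (2 * σa (i, l)) • (x i - a l))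
    (Gs : (S → EuclideanSpace ℝ (Fin n)) → (S × S → ℝ) → S × S → ℝ)
    (hGs : ∀ x σs p, Gs x σs p = (‖x p.1 - x p.2‖ ^ 2 - d p.1 p.2 ^ 2) - σs p / 2)
    (Ga : (S → EuclideanSpace ℝ (Fin n)) → (S × A → ℝ) → S × A → ℝ)
    (hGa : ∀ x σa q, Ga x σa q = (‖x q.1 - a q.2‖ ^ 2 - e q.1 q.2 ^ 2) - σa q / 2)
    -- strategy sets and the dual box
    (Ω : S → Set (EuclideanSpace ℝ (Fin n)))
    (hΩcv : ∀ i, Convex ℝ (Ω i))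
    (W : ℝ) (hW : 0 < W)
    -- metric projections onto the strategy sets
    (projΩ : S → EuclideanSpace ℝ (Fin n) → EuclideanSpace ℝ (Fin n))
    (hproj : ∀ i u, projΩ i u ∈ Ω i ∧ ∀ w ∈ Ω i, ‖u - projΩ i u‖ ≤ ‖u - w‖)
    -- step sizes and gradient bound
    (α : ℕ → ℝ) (hα : ∀ j, 0 < α j)
    (M₂ : ℝ) (hM₂pos : 0 < M₂)
    (hM₂ : ∀ (x : S → EuclideanSpace ℝ (Fin n)) (σs : S × S → ℝ) (σa : S × A → ℝ),
      (∀ i, x i ∈ Ω i) → (∀ p ∈ U, σs p ∈ Set.Icc (0 : ℝ) W) →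
      (∀ q ∈ Eas, σa q ∈ Set.Icc (0 : ℝ) W) →
      (∑ i : S, ‖Gx x σs σa i‖ ^ 2) + (∑ p ∈ U, Gs x σs p ^ 2)
        + (∑ q ∈ Eas, Ga x σa q ^ 2) ≤ M₂ ^ 2)
    -- the iterates
    (x : ℕ → S → EuclideanSpace ℝ (Fin n))
    (σs : ℕ → S × S → ℝ) (σa : ℕ → S × A → ℝ)
    (hx1 : ∀ i, x 1 i ∈ Ω i)
    (hσs1 : ∀ p ∈ U, σs 1 p ∈ Set.Icc (0 : ℝ) W)
    (hσa1 : ∀ q ∈ Eas, σa 1 q ∈ Set.Icc (0 : ℝ) W)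
    (hxup : ∀ k, 1 ≤ k → ∀ i,
      x (k + 1) i = projΩ i (x k i - α k • Gx (x k) (σs k) (σa k) i))
    (hσsup : ∀ k, 1 ≤ k → ∀ p ∈ U,
      σs (k + 1) p = max 0 (min W (σs k p + α k * Gs (x k) (σs k) p)))
    (hσaup : ∀ k, 1 ≤ k → ∀ q ∈ Eas,
      σa (k + 1) q = max 0 (min W (σa k q + α k * Ga (x k) (σa k) q)))
    -- the horizon, comparison point, and constant step sizes
    (k : ℕ) (hk : 1 ≤ k)
    (xd : S → EuclideanSpace ℝ (Fin n)) (σsd : S × S → ℝ) (σad : S × A → ℝ)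
    (hxdΩ : ∀ i, xd i ∈ Ω i)
    (hσsdB : ∀ p ∈ U, σsd p ∈ Set.Icc (0 : ℝ) W)
    (hσadB : ∀ q ∈ Eas, σad q ∈ Set.Icc (0 : ℝ) W)
    (dbar : ℝ) (hdbar : 0 < dbar)
    (hdist : (∑ i : S, ‖x 1 i - xd i‖ ^ 2) + (∑ p ∈ U, (σs 1 p - σsd p) ^ 2)
      + (∑ q ∈ Eas, (σa 1 q - σad q) ^ 2) ≤ 2 * dbar)
    (hstep : ∀ j ∈ Finset.Icc 1 k,
      α j = Real.sqrt (2 * dbar) / (M₂ * Real.sqrt k)) :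
    -- conclusion: O(1/√k) duality-gap bound at the weighted averages
    Γ (fun i => (∑ j ∈ Finset.Icc 1 k, α j)⁻¹ • ∑ j ∈ Finset.Icc 1 k, α j • x j i)
        σsd σad
      - Γ xd
          (fun p => (∑ j ∈ Finset.Icc 1 k, α j * σs j p) / ∑ j ∈ Finset.Icc 1 k, α j)
          (fun q => (∑ j ∈ Finset.Icc 1 k, α j * σa j q) / ∑ j ∈ Finset.Icc 1 k, α j)
    ≤ Real.sqrt (2 * dbar) * M₂ / Real.sqrt k := by
  open SensorLocalization in
  obtain rfl : Γ = complementary a U Eas d e := by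
    funext x σs σa; exact hΓ x σs σa
  obtain rfl : Gx = primalGrad a Ess U Eas := by
    funext x σs σa i; exact hGx x σs σa i
  obtain rfl : Gs = dualGradS d := by funext x σs p; exact hGs x σs p
  obtain rfl : Ga = dualGradA a e := by funext x σa q; exact hGa x σa q
  have feasible : ∀ j, 1 ≤ j → (∀ i, x j i ∈ Ω i) ∧ (∀ p ∈ U, σs j p ∈ Set.Icc 0 W)
      ∧ ∀ q ∈ Eas, σa j q ∈ Set.Icc 0 W := by
    intro j hj
    induction j, hj using Nat.le_induction with
    | base => exact ⟨hx1, hσs1, hσa1⟩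
    | succ j hj _ => exact ⟨fun i => hxup j hj i ▸ (hproj i _).1,
        fun p hp => hσsup j hj p hp ▸ max_min_mem_Icc hW.le _,
        fun q hq => hσaup j hj q hq ▸ max_min_mem_Icc hW.le _⟩
  refine (complementary_centerMass_sub_le a U Eas d e (Finset.Icc 1 k) (fun j _ => (hα j).le)
    (Finset.sum_pos (fun j _ => hα j) (Finset.nonempty_Icc.2 hk)) x σs σa xd
    (fun p hp => (hσsdB p hp).1) (fun q hq => (hσadB q hq).1)).trans
    (inv_sum_mul_le_of_descent (D := fun j => sqDist U Eas (x j) xd (σs j) σsd (σa j) σad)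
      hk hM₂pos hdbar hstep (fun j hj => ?_) hdist
      (sqDist_nonneg U Eas (x (k + 1)) xd (σs (k + 1)) σsd (σa (k + 1)) σad))
  have hj1 := (Finset.mem_Icc.1 hj).1
  obtain ⟨hxj, hσsj, hσaj⟩ := feasible j hj1
  exact sqDist_step_le_sub_gap a Ess U Eas d e hsym hUsub hUone hΩcv hproj (hα j).le
    (fun p hp => (hσsj p hp).1) (fun q hq => (hσaj q hq).1) (hM₂ _ _ _ hxj hσsj hσaj)
    (hxup j hj1) (hσsup j hj1) (hσaup j hj1) hxdΩ hσsdB hσadB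

/-- O(1/√k) convergence rate of the conjugate-based algorithm
(Theorem 2(ii)) under constant step sizes `α_j = √(2 d̄)/(M₂ √k)`. -/
theorem stmt_13
    (n : ℕ) (hn : 1 ≤ n)
    (S A : Type) [Fintype S] [DecidableEq S] [Fintype A] [DecidableEq A]
    (a : A → EuclideanSpace ℝ (Fin n))
    (Ess : Finset (S × S))
    (hsym : ∀ i j : S, (i, j) ∈ Ess → (j, i) ∈ Ess)
    (hirr : ∀ i : S, (i, i) ∉ Ess)
    (U : Finset (S × S)) (hUsub : U ⊆ Ess)
    (hUone : ∀ i j : S, (i, j) ∈ Ess → ((i, j) ∈ U ↔ (j, i) ∉ U))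
    (Eas : Finset (S × A))
    (d : S → S → ℝ) (hd : ∀ i j, d i j = d j i)
    (e : S → A → ℝ)
    -- the complementary function
    (Γ : (S → EuclideanSpace ℝ (Fin n)) → (S × S → ℝ) → (S × A → ℝ) → ℝ)
    (hΓ : ∀ x σs σa, Γ x σs σa =
      (∑ p ∈ U, (σs p * (‖x p.1 - x p.2‖ ^ 2 - d p.1 p.2 ^ 2) - σs p ^ 2 / 4))
        + ∑ q ∈ Eas,
            (σa q * (‖x q.1 - a q.2‖ ^ 2 - e q.1 q.2 ^ 2) - σa q ^ 2 / 4))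
    -- the partial gradients of Γ
    (Gx : (S → EuclideanSpace ℝ (Fin n)) → (S × S → ℝ) → (S × A → ℝ) →
      S → EuclideanSpace ℝ (Fin n))
    (hGx : ∀ x σs σa i, Gx x σs σa i =
      (∑ j ∈ Finset.univ.filter (fun j => (i, j) ∈ Ess),
        (2 * (if (i, j) ∈ U then σs (i, j) else σs (j, i))) • (x i - x j))
        + ∑ l ∈ Finset.univ.filter (fun l => (i, l) ∈ Eas),
            (2 * σa (i, l)) • (x i - a l))
    (Gs : (S → EuclideanSpace ℝ (Fin n)) → (S × S → ℝ) → S × S → ℝ)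
    (hGs : ∀ x σs p, Gs x σs p = (‖x p.1 - x p.2‖ ^ 2 - d p.1 p.2 ^ 2) - σs p / 2)
    (Ga : (S → EuclideanSpace ℝ (Fin n)) → (S × A → ℝ) → S × A → ℝ)
    (hGa : ∀ x σa q, Ga x σa q = (‖x q.1 - a q.2‖ ^ 2 - e q.1 q.2 ^ 2) - σa q / 2)
    -- strategy sets and the dual box
    (Ω : S → Set (EuclideanSpace ℝ (Fin n)))
    (hΩne : ∀ i, (Ω i).Nonempty) (hΩcv : ∀ i, Convex ℝ (Ω i))
    (hΩcp : ∀ i, IsCompact (Ω i))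
    (W : ℝ) (hW : 0 < W)
    -- metric projections onto the strategy sets
    (projΩ : S → EuclideanSpace ℝ (Fin n) → EuclideanSpace ℝ (Fin n))
    (hproj : ∀ i u, projΩ i u ∈ Ω i ∧ ∀ w ∈ Ω i, ‖u - projΩ i u‖ ≤ ‖u - w‖)
    -- step sizes and gradient bound
    (α : ℕ → ℝ) (hα : ∀ j, 0 < α j)
    (M₂ : ℝ) (hM₂pos : 0 < M₂)
    (hM₂ : ∀ (x : S → EuclideanSpace ℝ (Fin n)) (σs : S × S → ℝ) (σa : S × A → ℝ),
      (∀ i, x i ∈ Ω i) → (∀ p ∈ U, σs p ∈ Set.Icc (0 : ℝ) W) →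
      (∀ q ∈ Eas, σa q ∈ Set.Icc (0 : ℝ) W) →
      (∑ i : S, ‖Gx x σs σa i‖ ^ 2) + (∑ p ∈ U, Gs x σs p ^ 2)
        + (∑ q ∈ Eas, Ga x σa q ^ 2) ≤ M₂ ^ 2)
    -- the iterates
    (x : ℕ → S → EuclideanSpace ℝ (Fin n))
    (σs : ℕ → S × S → ℝ) (σa : ℕ → S × A → ℝ)
    (hx1 : ∀ i, x 1 i ∈ Ω i)
    (hσs1 : ∀ p ∈ U, σs 1 p ∈ Set.Icc (0 : ℝ) W)
    (hσa1 : ∀ q ∈ Eas, σa 1 q ∈ Set.Icc (0 : ℝ) W)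
    (hxup : ∀ k, 1 ≤ k → ∀ i,
      x (k + 1) i = projΩ i (x k i - α k • Gx (x k) (σs k) (σa k) i))
    (hσsup : ∀ k, 1 ≤ k → ∀ p ∈ U,
      σs (k + 1) p = max 0 (min W (σs k p + α k * Gs (x k) (σs k) p)))
    (hσaup : ∀ k, 1 ≤ k → ∀ q ∈ Eas,
      σa (k + 1) q = max 0 (min W (σa k q + α k * Ga (x k) (σa k) q)))
    -- the horizon, comparison point, and constant step sizes
    (k : ℕ) (hk : 1 ≤ k)
    (xd : S → EuclideanSpace ℝ (Fin n)) (σsd : S × S → ℝ) (σad : S × A → ℝ)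
    (hxdΩ : ∀ i, xd i ∈ Ω i)
    (hσsdB : ∀ p ∈ U, σsd p ∈ Set.Icc (0 : ℝ) W)
    (hσadB : ∀ q ∈ Eas, σad q ∈ Set.Icc (0 : ℝ) W)
    (dbar : ℝ) (hdbar : 0 < dbar)
    (hdist : (∑ i : S, ‖x 1 i - xd i‖ ^ 2) + (∑ p ∈ U, (σs 1 p - σsd p) ^ 2)
      + (∑ q ∈ Eas, (σa 1 q - σad q) ^ 2) ≤ 2 * dbar)
    (hstep : ∀ j ∈ Finset.Icc 1 k,
      α j = Real.sqrt (2 * dbar) / (M₂ * Real.sqrt k)) :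
    -- conclusion: O(1/√k) duality-gap bound at the weighted averages
    Γ (fun i => (∑ j ∈ Finset.Icc 1 k, α j)⁻¹ • ∑ j ∈ Finset.Icc 1 k, α j • x j i)
        σsd σad
      - Γ xd
          (fun p => (∑ j ∈ Finset.Icc 1 k, α j * σs j p) / ∑ j ∈ Finset.Icc 1 k, α j)
          (fun q => (∑ j ∈ Finset.Icc 1 k, α j * σa j q) / ∑ j ∈ Finset.Icc 1 k, α j)
    ≤ Real.sqrt (2 * dbar) * M₂ / Real.sqrt k :=
  stmt_13_general n S A a Ess hsym U hUsub hUone Eas d e Γ hΓ Gx hGx Gs hGs Ga hGa Ω hΩcv W hW projΩ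
    hproj α hα M₂ hM₂pos hM₂ x σs σa hx1 hσs1 hσa1 hxup hσsup hσaup k hk xd σsd σad hxdΩ hσsdB hσadB
    dbar hdbar hdist hstep
end

section
/- Global convergence of the extra-gradient method (Theorem 4, convergence part): let K be a nonempty compact convex subset of a finite-dimensional real inner product space, let F : K → E be monotone on K and L-Lipschitz on K with L > 0, and let β > 0 satisfy βL < 1. Starting from any z[0] ∈ K, define z̃[k] = Π_K(z[k] − β F(z[k])) and z[k+1] = Π_K(z[k] − β F(z̃[k])). Then there exists z⋄ ∈ K with z⋄ = Π_K(z⋄ − β F(z⋄)) such that both sequences converge to it: lim_{k→∞} z[k] = lim_{k→∞} z̃[k] = z⋄. -/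
open Filter Topology
open scoped RealInnerProductSpace

lemma proj_vi {E : Type} [NormedAddCommGroup E] [InnerProductSpace ℝ E]
    {K : Set E} (hKcv : Convex ℝ K) {proj : E → E}
    (hproj : ∀ u : E, proj u ∈ K ∧ ∀ w ∈ K, ‖u - proj u‖ ≤ ‖u - w‖) (u : E) :
    ∀ w ∈ K, ⟪u - proj u, w - proj u⟫ ≤ 0 := by
  have hmem := (hproj u).1
  haveI : Nonempty K := ⟨⟨proj u, hmem⟩⟩
  have heq : ‖u - proj u‖ = ⨅ w : K, ‖u - w‖ := by
    refine le_antisymm (le_ciInf fun w => (hproj u).2 w w.2) ?_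
    exact ciInf_le ⟨0, by rintro x ⟨w, rfl⟩; exact norm_nonneg _⟩ (⟨proj u, hmem⟩ : K)
  exact (norm_eq_iInf_iff_real_inner_le_zero hKcv hmem).1 heq

lemma proj_nonexp {E : Type} [NormedAddCommGroup E] [InnerProductSpace ℝ E]
    {K : Set E} (hKcv : Convex ℝ K) {proj : E → E}
    (hproj : ∀ u : E, proj u ∈ K ∧ ∀ w ∈ K, ‖u - proj u‖ ≤ ‖u - w‖) (u v : E) :
    ‖proj u - proj v‖ ≤ ‖u - v‖ := by
  have h1 := proj_vi hKcv hproj u (proj v) (hproj v).1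
  have h2 := proj_vi hKcv hproj v (proj u) (hproj u).1
  set p := proj u; set q := proj v
  have key : ‖p - q‖ ^ 2 ≤ ⟪u - v, p - q⟫ := by
    have h1' : ⟪p - u, p - q⟫ ≤ 0 := by
      rw [show p - u = -(u - p) by abel, show p - q = -(q - p) by abel, inner_neg_neg]
      exact h1
    have hsum : ⟪(p - u) + (v - q), p - q⟫ ≤ 0 := by rw [inner_add_left]; linarith
    have h3 : ⟪p - q, p - q⟫ - ⟪u - v, p - q⟫ ≤ 0 := by
      rw [← inner_sub_left]
      have : p - q - (u - v) = (p - u) + (v - q) := by abel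
      rw [this]; exact hsum
    rw [real_inner_self_eq_norm_sq] at h3
    linarith
  have hcs : ⟪u - v, p - q⟫ ≤ ‖u - v‖ * ‖p - q‖ := real_inner_le_norm _ _
  rcases eq_or_lt_of_le (norm_nonneg (p - q)) with h | h
  · rw [← h]; exact norm_nonneg _
  · nlinarith [key, hcs, h]
lemma key_step {E : Type} [NormedAddCommGroup E] [InnerProductSpace ℝ E]
    {K : Set E} (hKcv : Convex ℝ K) {proj : E → E}
    (hproj : ∀ u : E, proj u ∈ K ∧ ∀ w ∈ K, ‖u - proj u‖ ≤ ‖u - w‖)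
    {F : E → E} {L β : ℝ} (hL : 0 ≤ L) (hβ : 0 < β) (hβL : β * L ≤ 1)
    (hmono : ∀ u ∈ K, ∀ v ∈ K, 0 ≤ ⟪F u - F v, u - v⟫)
    (hLip : ∀ u ∈ K, ∀ v ∈ K, ‖F u - F v‖ ≤ L * ‖u - v‖)
    {w : E} (hw : w ∈ K) (hwVI : ∀ v ∈ K, 0 ≤ ⟪F w, v - w⟫)
    {x y x' : E} (hx : x ∈ K)
    (hy : y = proj (x - β • F x)) (hx' : x' = proj (x - β • F y)) :
    ‖x' - w‖ ^ 2 + (1 - β * L) * ‖x - y‖ ^ 2 ≤ ‖x - w‖ ^ 2 := by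
  have hyK : y ∈ K := hy ▸ (hproj _).1
  have hx'K : x' ∈ K := hx' ▸ (hproj _).1
  have f3 : β * ⟪F y, x' - w⟫ ≤ ⟪x - x', x' - w⟫ := by
    have hA := proj_vi hKcv hproj (x - β • F y) w hw
    rw [← hx'] at hA
    rw [show x - β • F y - x' = (x - x') - β • F y by abel,
        show w - x' = -(x' - w) by abel, inner_neg_right, inner_sub_left,
        real_inner_smul_left] at hA
    linarith
  have f7 : ⟪x - y, x' - y⟫ ≤ β * ⟪F x, x' - y⟫ := by
    have hB := proj_vi hKcv hproj (x - β • F x) x' hx'K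
    rw [← hy] at hB
    rw [show x - β • F x - y = (x - y) - β • F x by abel, inner_sub_left,
        real_inner_smul_left] at hB
    linarith
  have f5 : 0 ≤ ⟪F y, y - w⟫ := by
    have hm := hmono y hyK w hw
    rw [inner_sub_left] at hm
    have := hwVI y hyK
    linarith
  have f6 : ⟪F x - F y, x' - y⟫ ≤ L * ‖x - y‖ * ‖x' - y‖ := by
    calc ⟪F x - F y, x' - y⟫ ≤ ‖F x - F y‖ * ‖x' - y‖ := real_inner_le_norm _ _
      _ ≤ (L * ‖x - y‖) * ‖x' - y‖ :=
        mul_le_mul_of_nonneg_right (hLip x hx y hyK) (norm_nonneg _)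
      _ = L * ‖x - y‖ * ‖x' - y‖ := by ring
  have e1 := norm_add_sq_real (x - x') (x' - w)
  rw [show (x - x') + (x' - w) = x - w by abel] at e1
  have e2 := norm_sub_sq_real (x - y) (x' - y)
  rw [show (x - y) - (x' - y) = x - x' by abel] at e2
  have e3 : ⟪F y, x' - w⟫ = ⟪F y, x' - y⟫ + ⟪F y, y - w⟫ := by
    rw [show x' - w = (x' - y) + (y - w) by abel, inner_add_right]
  have e4 : ⟪F y, x' - y⟫ = ⟪F x, x' - y⟫ - ⟪F x - F y, x' - y⟫ := by
    rw [inner_sub_left]; ring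
  have g4 : β * ⟪F y, x' - w⟫
      = β * ⟪F x, x' - y⟫ - β * ⟪F x - F y, x' - y⟫ + β * ⟪F y, y - w⟫ := by
    rw [e3, e4]; ring
  have g5 : 0 ≤ β * ⟪F y, y - w⟫ := mul_nonneg hβ.le f5
  have g6 : β * ⟪F x - F y, x' - y⟫ ≤ β * (L * ‖x - y‖ * ‖x' - y‖) :=
    mul_le_mul_of_nonneg_left f6 hβ.le
  have g8 : 2 * (β * (L * ‖x - y‖ * ‖x' - y‖)) ≤ β * L * ‖x - y‖ ^ 2 + β * L * ‖x' - y‖ ^ 2 := by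
    nlinarith [sq_nonneg (‖x - y‖ - ‖x' - y‖), mul_nonneg hβ.le hL]
  have g9 : 0 ≤ ‖x' - y‖ ^ 2 - β * L * ‖x' - y‖ ^ 2 := by
    nlinarith [sq_nonneg ‖x' - y‖]
  have expand : (1 - β * L) * ‖x - y‖ ^ 2 = ‖x - y‖ ^ 2 - β * L * ‖x - y‖ ^ 2 := by ring
  rw [expand]
  linarith
-- regularized VI solution for a single ε
lemma eps_sol {E : Type} [NormedAddCommGroup E] [InnerProductSpace ℝ E]
    {K : Set E} (hKcp : IsCompact K) (hKcv : Convex ℝ K) {proj : E → E}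
    (hproj : ∀ u : E, proj u ∈ K ∧ ∀ w ∈ K, ‖u - proj u‖ ≤ ‖u - w‖)
    {F : E → E} {L : ℝ} (hL : 0 < L)
    (hmono : ∀ u ∈ K, ∀ v ∈ K, 0 ≤ ⟪F u - F v, u - v⟫)
    (hLip : ∀ u ∈ K, ∀ v ∈ K, ‖F u - F v‖ ≤ L * ‖u - v‖)
    {u0 : E} (hu0 : u0 ∈ K) {ε : ℝ} (hε : 0 < ε) :
    ∃ u ∈ K, ∀ w ∈ K, 0 ≤ ⟪F u, w - u⟫ + ε * ⟪u - u0, w - u⟫ := by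
  set γ : ℝ := ε / (ε ^ 2 + L ^ 2) with hγdef
  have hden : 0 < ε ^ 2 + L ^ 2 := by positivity
  have hγ : 0 < γ := div_pos hε hden
  have hkey : γ * (ε ^ 2 + L ^ 2) = ε := by rw [hγdef]; field_simp
  have hγε : γ * ε < 1 := by nlinarith [sq_nonneg L, sq_nonneg ε]
  have hγεnn : 0 ≤ 1 - γ * ε := by nlinarith [mul_pos hγ hε]
  set T : E → E := fun u => proj (u - γ • (F u + ε • (u - u0))) with hTdef
  have hTK : ∀ u, T u ∈ K := fun u => (hproj _).1
  -- contraction estimate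
  have hcontr : ∀ u ∈ K, ∀ v ∈ K, ‖T u - T v‖ ≤ Real.sqrt (1 - γ * ε) * ‖u - v‖ := by
    intro u hu v hv
    have hvec : (u - γ • (F u + ε • (u - u0))) - (v - γ • (F v + ε • (v - u0)))
        = (1 - γ * ε) • (u - v) - γ • (F u - F v) := by
      simp only [smul_add, smul_sub, smul_smul, sub_smul, one_smul]
      abel
    have h0 : ‖T u - T v‖ ≤ ‖(1 - γ * ε) • (u - v) - γ • (F u - F v)‖ := by
      rw [← hvec]; exact proj_nonexp hKcv hproj _ _
    have hsq : ‖(1 - γ * ε) • (u - v) - γ • (F u - F v)‖ ^ 2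
        ≤ (1 - γ * ε) * ‖u - v‖ ^ 2 := by
      rw [norm_sub_sq_real]
      rw [real_inner_smul_left, real_inner_smul_right, norm_smul, norm_smul]
      have hm := hmono u hu v hv
      have hlip := hLip u hu v hv
      have hFsq : ‖F u - F v‖ ^ 2 ≤ L ^ 2 * ‖u - v‖ ^ 2 := by
        nlinarith [norm_nonneg (F u - F v), norm_nonneg (u - v)]
      have hident : (1 - γ * ε) ^ 2 + γ ^ 2 * L ^ 2 = 1 - γ * ε := by
        linear_combination γ * hkey
      have h1 : ‖(1 - γ * ε) • (u - v)‖ = (1 - γ * ε) * ‖u - v‖ := by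
        rw [norm_smul, Real.norm_eq_abs, abs_of_nonneg hγεnn]
      rw [Real.norm_eq_abs, Real.norm_eq_abs, abs_of_nonneg hγεnn, abs_of_nonneg hγ.le,
        ]
      have hm' : 0 ≤ ⟪u - v, F u - F v⟫ := by rw [real_inner_comm]; exact hm
      have hident2 : (1 - γ * ε) ^ 2 * ‖u - v‖ ^ 2 + γ ^ 2 * L ^ 2 * ‖u - v‖ ^ 2
          = (1 - γ * ε) * ‖u - v‖ ^ 2 := by linear_combination ‖u - v‖ ^ 2 * hident
      have hG : γ ^ 2 * ‖F u - F v‖ ^ 2 ≤ γ ^ 2 * (L ^ 2 * ‖u - v‖ ^ 2) :=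
        mul_le_mul_of_nonneg_left hFsq (sq_nonneg γ)
      nlinarith [hident2, hG, mul_nonneg (mul_nonneg hγεnn hγ.le) hm']
    calc ‖T u - T v‖ ≤ ‖(1 - γ * ε) • (u - v) - γ • (F u - F v)‖ := h0
      _ = Real.sqrt (‖(1 - γ * ε) • (u - v) - γ • (F u - F v)‖ ^ 2) := by
          rw [Real.sqrt_sq (norm_nonneg _)]
      _ ≤ Real.sqrt ((1 - γ * ε) * ‖u - v‖ ^ 2) := Real.sqrt_le_sqrt hsq
      _ = Real.sqrt (1 - γ * ε) * ‖u - v‖ := by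
          rw [Real.sqrt_mul hγεnn, Real.sqrt_sq (norm_nonneg _)]
  -- Banach fixed point on the complete set K
  set q : NNReal := ⟨Real.sqrt (1 - γ * ε), Real.sqrt_nonneg _⟩ with hqdef
  have hq1 : q < 1 := by
    rw [← NNReal.coe_lt_coe]
    simp only [hqdef, NNReal.coe_one, NNReal.coe_mk]
    calc Real.sqrt (1 - γ * ε) < Real.sqrt 1 := by
          apply Real.sqrt_lt_sqrt hγεnn; nlinarith [mul_pos hγ hε]
      _ = 1 := Real.sqrt_one
  have hmaps : Set.MapsTo T K K := fun u _ => hTK u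
  have hlipT : ContractingWith q (hmaps.restrict T K K) := by
    constructor
    · exact hq1
    · apply LipschitzWith.of_dist_le_mul
      rintro ⟨a, ha⟩ ⟨b, hb⟩
      simp only [Set.MapsTo.restrict, Subtype.dist_eq, dist_eq_norm]
      exact hcontr a ha b hb
  obtain ⟨u, huK, hufix, -⟩ := ContractingWith.exists_fixedPoint'
    (hKcp.isComplete) hmaps hlipT hu0 (edist_ne_top _ _)
  refine ⟨u, huK, fun w hw => ?_⟩
  have hA := proj_vi hKcv hproj (u - γ • (F u + ε • (u - u0))) w hw
  have hfix' : proj (u - γ • (F u + ε • (u - u0))) = u := hufix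
  rw [hfix'] at hA
  rw [show u - γ • (F u + ε • (u - u0)) - u = -(γ • (F u + ε • (u - u0))) by abel,
      inner_neg_left, real_inner_smul_left, inner_add_left, real_inner_smul_left] at hA
  have : 0 ≤ ⟪F u, w - u⟫ + ε * ⟪u - u0, w - u⟫ := by
    have := (neg_nonpos.mp hA : _)
    nlinarith [hγ]
  exact this
lemma exists_vi {E : Type} [NormedAddCommGroup E] [InnerProductSpace ℝ E]
    {K : Set E} (hKne : K.Nonempty) (hKcp : IsCompact K) (hKcv : Convex ℝ K)
    {proj : E → E}
    (hproj : ∀ u : E, proj u ∈ K ∧ ∀ w ∈ K, ‖u - proj u‖ ≤ ‖u - w‖)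
    {F : E → E} {L : ℝ} (hL : 0 < L)
    (hmono : ∀ u ∈ K, ∀ v ∈ K, 0 ≤ ⟪F u - F v, u - v⟫)
    (hLip : ∀ u ∈ K, ∀ v ∈ K, ‖F u - F v‖ ≤ L * ‖u - v‖) :
    ∃ zs ∈ K, ∀ w ∈ K, 0 ≤ ⟪F zs, w - zs⟫ := by
  obtain ⟨u0, hu0⟩ := hKne
  have hsol : ∀ n : ℕ, ∃ u ∈ K, ∀ w ∈ K,
      0 ≤ ⟪F u, w - u⟫ + (1 / ((n : ℝ) + 1)) * ⟪u - u0, w - u⟫ := fun n =>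
    eps_sol hKcp hKcv hproj hL hmono hLip hu0
      (show (0:ℝ) < 1 / ((n : ℝ) + 1) by positivity)
  choose u huK huVI using hsol
  obtain ⟨zs, hzsK, ψ, hψ, hconv⟩ := hKcp.tendsto_subseq huK
  refine ⟨zs, hzsK, fun w hw => ?_⟩
  have hFlim : Tendsto (fun j => F (u (ψ j))) atTop (𝓝 (F zs)) := by
    rw [tendsto_iff_norm_sub_tendsto_zero]
    have hb : ∀ j, ‖F (u (ψ j)) - F zs‖ ≤ L * ‖u (ψ j) - zs‖ := fun j =>
      hLip _ (huK _) _ hzsK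
    have h0 : Tendsto (fun j => L * ‖u (ψ j) - zs‖) atTop (𝓝 (L * 0)) := by
      exact (tendsto_iff_norm_sub_tendsto_zero.mp hconv).const_mul L
    rw [mul_zero] at h0
    exact squeeze_zero (fun j => norm_nonneg _) hb h0
  have huconv : Tendsto (fun j => u (ψ j)) atTop (𝓝 zs) := hconv
  have hlim1 : Tendsto (fun j => ⟪F (u (ψ j)), w - u (ψ j)⟫) atTop
      (𝓝 ⟪F zs, w - zs⟫) := hFlim.inner (tendsto_const_nhds.sub huconv)
  have hεlim : Tendsto (fun j => 1 / ((ψ j : ℝ) + 1)) atTop (𝓝 0) :=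
    tendsto_one_div_add_atTop_nhds_zero_nat.comp hψ.tendsto_atTop
  have hlim2 : Tendsto
      (fun j => (1 / ((ψ j : ℝ) + 1)) * ⟪u (ψ j) - u0, w - u (ψ j)⟫) atTop
      (𝓝 (0 * ⟪zs - u0, w - zs⟫)) :=
    hεlim.mul ((huconv.sub tendsto_const_nhds).inner (tendsto_const_nhds.sub huconv))
  rw [zero_mul] at hlim2
  have hsum : Tendsto (fun j => ⟪F (u (ψ j)), w - u (ψ j)⟫
      + (1 / ((ψ j : ℝ) + 1)) * ⟪u (ψ j) - u0, w - u (ψ j)⟫) atTop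
      (𝓝 (⟪F zs, w - zs⟫ + 0)) := hlim1.add hlim2
  have := le_of_tendsto_of_tendsto' (tendsto_const_nhds : Tendsto (fun _ : ℕ => (0:ℝ)) atTop (𝓝 0))
    hsum (fun j => huVI (ψ j) w hw)
  simpa using this

/-- Global convergence of the extra-gradient method (Theorem 4,
convergence part): the iterates converge to a fixed point of the projected
map. -/
theorem stmt_16
    (E : Type) [NormedAddCommGroup E] [InnerProductSpace ℝ E]
    [FiniteDimensional ℝ E]
    (K : Set E) (hKne : K.Nonempty) (hKcp : IsCompact K) (hKcv : Convex ℝ K)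
    (proj : E → E)
    (hproj : ∀ u : E, proj u ∈ K ∧ ∀ w ∈ K, ‖u - proj u‖ ≤ ‖u - w‖)
    (F : E → E) (L : ℝ) (hL : 0 < L)
    (hmono : ∀ u ∈ K, ∀ v ∈ K, 0 ≤ ⟪F u - F v, u - v⟫)
    (hLip : ∀ u ∈ K, ∀ v ∈ K, ‖F u - F v‖ ≤ L * ‖u - v‖)
    (β : ℝ) (hβ : 0 < β) (hβL : β * L < 1)
    (z ztil : ℕ → E)
    (hz0 : z 0 ∈ K)
    (h1 : ∀ k, ztil k = proj (z k - β • F (z k)))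
    (h2 : ∀ k, z (k + 1) = proj (z k - β • F (ztil k))) :
    ∃ zd ∈ K, zd = proj (zd - β • F zd) ∧
      Filter.Tendsto z Filter.atTop (nhds zd) ∧
      Filter.Tendsto ztil Filter.atTop (nhds zd) := by
  have hzK : ∀ k, z k ∈ K := by
    intro k
    cases k with
    | zero => exact hz0
    | succ n => rw [h2 n]; exact (hproj _).1
  have hztilK : ∀ k, ztil k ∈ K := fun k => by rw [h1 k]; exact (hproj _).1
  have hc : 0 < 1 - β * L := by linarith
  have key : ∀ w ∈ K, (∀ v ∈ K, 0 ≤ ⟪F w, v - w⟫) → ∀ k,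
      ‖z (k+1) - w‖ ^ 2 + (1 - β * L) * ‖z k - ztil k‖ ^ 2 ≤ ‖z k - w‖ ^ 2 :=
    fun w hw hwVI k =>
      key_step hKcv hproj hL.le hβ hβL.le hmono hLip hw hwVI (hzK k) (h1 k) (h2 k)
  obtain ⟨zs, hzsK, hzsVI⟩ := exists_vi hKne hKcp hKcv hproj hL hmono hLip
  -- the gap ‖z k - ztil k‖ tends to zero
  have hgap : ∀ w ∈ K, (∀ v ∈ K, 0 ≤ ⟪F w, v - w⟫) →
      Antitone (fun k => ‖z k - w‖ ^ 2) := by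
    intro w hw hwVI
    apply antitone_nat_of_succ_le
    intro k
    have := key w hw hwVI k
    nlinarith [sq_nonneg ‖z k - ztil k‖, mul_nonneg hc.le (sq_nonneg ‖z k - ztil k‖)]
  have hAanti := hgap zs hzsK hzsVI
  have hAbdd : BddBelow (Set.range fun k => ‖z k - zs‖ ^ 2) :=
    ⟨0, by rintro x ⟨k, rfl⟩; positivity⟩
  have hAconv : Tendsto (fun k => ‖z k - zs‖ ^ 2) atTop
      (𝓝 (⨅ k, ‖z k - zs‖ ^ 2)) := tendsto_atTop_ciInf hAanti hAbdd
  have hAconv' : Tendsto (fun k => ‖z (k+1) - zs‖ ^ 2) atTop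
      (𝓝 (⨅ k, ‖z k - zs‖ ^ 2)) := hAconv.comp (tendsto_add_atTop_nat 1)
  have hdiff : Tendsto (fun k => ‖z k - zs‖ ^ 2 - ‖z (k+1) - zs‖ ^ 2) atTop (𝓝 0) := by
    have := hAconv.sub hAconv'
    simpa using this
  have hd0 : Tendsto (fun k => ‖z k - ztil k‖ ^ 2) atTop (𝓝 0) := by
    have hub : ∀ k, (1 - β * L) * ‖z k - ztil k‖ ^ 2
        ≤ ‖z k - zs‖ ^ 2 - ‖z (k+1) - zs‖ ^ 2 := fun k => by
      have := key zs hzsK hzsVI k; linarith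
    have hsq : Tendsto (fun k => (1 - β * L) * ‖z k - ztil k‖ ^ 2) atTop (𝓝 0) :=
      squeeze_zero (fun k => by positivity) hub hdiff
    have h := hsq.const_mul (1 - β * L)⁻¹
    rw [mul_zero] at h
    refine h.congr fun k => ?_
    field_simp
  have hn0 : Tendsto (fun k => ‖z k - ztil k‖) atTop (𝓝 0) := by
    have h := (Real.continuous_sqrt.tendsto 0).comp hd0
    rw [Real.sqrt_zero] at h
    exact h.congr fun k => Real.sqrt_sq (norm_nonneg _)
  have hsub0 : Tendsto (fun k => z k - ztil k) atTop (𝓝 0) :=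
    tendsto_zero_iff_norm_tendsto_zero.mpr hn0
  -- convergent subsequence
  obtain ⟨zd, hzdK, φ, hφ, hzφ⟩ := hKcp.tendsto_subseq hzK
  have hsubφ : Tendsto (fun j => z (φ j) - ztil (φ j)) atTop (𝓝 0) :=
    hsub0.comp hφ.tendsto_atTop
  have hztilφ : Tendsto (fun j => ztil (φ j)) atTop (𝓝 zd) := by
    have h := hzφ.sub hsubφ
    rw [sub_zero] at h
    exact h.congr fun j => by simp [Function.comp]
  -- the limit is a fixed point of the projected map
  have hTlim : Tendsto (fun j => ztil (φ j)) atTop (𝓝 (proj (zd - β • F zd))) := by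
    rw [tendsto_iff_norm_sub_tendsto_zero]
    have hb : ∀ j, ‖ztil (φ j) - proj (zd - β • F zd)‖
        ≤ (1 + β * L) * ‖z (φ j) - zd‖ := by
      intro j
      rw [h1 (φ j)]
      calc ‖proj (z (φ j) - β • F (z (φ j))) - proj (zd - β • F zd)‖
          ≤ ‖(z (φ j) - β • F (z (φ j))) - (zd - β • F zd)‖ :=
            proj_nonexp hKcv hproj _ _
        _ = ‖(z (φ j) - zd) - β • (F (z (φ j)) - F zd)‖ := by
            rw [smul_sub]; congr 1; abel
        _ ≤ ‖z (φ j) - zd‖ + ‖β • (F (z (φ j)) - F zd)‖ := norm_sub_le _ _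
        _ = ‖z (φ j) - zd‖ + β * ‖F (z (φ j)) - F zd‖ := by
            rw [norm_smul, Real.norm_eq_abs, abs_of_nonneg hβ.le]
        _ ≤ ‖z (φ j) - zd‖ + β * (L * ‖z (φ j) - zd‖) := by
            have := hLip (z (φ j)) (hzK _) zd hzdK
            nlinarith [hβ.le]
        _ = (1 + β * L) * ‖z (φ j) - zd‖ := by ring
    have h0 : Tendsto (fun j => (1 + β * L) * ‖z (φ j) - zd‖) atTop (𝓝 ((1 + β * L) * 0)) :=
      (tendsto_iff_norm_sub_tendsto_zero.mp hzφ).const_mul _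
    rw [mul_zero] at h0
    exact squeeze_zero (fun j => norm_nonneg _) hb h0
  have hfix : zd = proj (zd - β • F zd) := tendsto_nhds_unique hztilφ hTlim
  -- zd satisfies the variational inequality
  have hzdVI : ∀ v ∈ K, 0 ≤ ⟪F zd, v - zd⟫ := by
    intro v hv
    have hA := proj_vi hKcv hproj (zd - β • F zd) v hv
    rw [← hfix] at hA
    rw [show zd - β • F zd - zd = -(β • F zd) by abel, inner_neg_left,
        real_inner_smul_left] at hA
    nlinarith [hβ]
  -- Fejér monotonicity w.r.t. zd gives convergence of the full sequence
  have hBanti := hgap zd hzdK hzdVI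
  have hBbdd : BddBelow (Set.range fun k => ‖z k - zd‖ ^ 2) :=
    ⟨0, by rintro x ⟨k, rfl⟩; positivity⟩
  have hBconv : Tendsto (fun k => ‖z k - zd‖ ^ 2) atTop
      (𝓝 (⨅ k, ‖z k - zd‖ ^ 2)) := tendsto_atTop_ciInf hBanti hBbdd
  have hBφ : Tendsto (fun j => ‖z (φ j) - zd‖ ^ 2) atTop (𝓝 0) := by
    have h := ((hzφ.sub (tendsto_const_nhds : Tendsto (fun _ : ℕ => zd) atTop (𝓝 zd))).norm).pow 2
    rw [sub_self, norm_zero] at h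
    simpa using h
  have hB0 : Tendsto (fun k => ‖z k - zd‖ ^ 2) atTop (𝓝 0) := by
    have h := hBconv.comp hφ.tendsto_atTop
    have h0 : (⨅ k, ‖z k - zd‖ ^ 2) = 0 := tendsto_nhds_unique h hBφ
    rwa [h0] at hBconv
  have hzconv : Tendsto z atTop (𝓝 zd) := by
    rw [tendsto_iff_norm_sub_tendsto_zero]
    have h := (Real.continuous_sqrt.tendsto 0).comp hB0
    rw [Real.sqrt_zero] at h
    exact h.congr fun k => Real.sqrt_sq (norm_nonneg _)
  have hztilconv : Tendsto ztil atTop (𝓝 zd) := by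
    have h := hzconv.sub hsub0
    rw [sub_zero] at h
    exact h.congr fun k => by abel
  exact ⟨zd, hzdK, hfix, hzconv, hztilconv⟩
end
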